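/- arXiv:2008.01662 — 2 statements merged into one kernel-verified Lean document; each statement's English description precedes it below -/
import Mathlib

section
/- Let a, b₁, b₂ > 0, ψ₁ as above, and let u₊ be the unique positive zero of φ₁(u) = 3b₁(u+1)⁴ − (8b₁+4ab₂)(u+1)³ + 6b₁(1−a)(u+1)² − b₁(a−1)², with x₊ = u₊² + 2u₊. Then ψ₁″(x) < 0 for x ∈ (0, x₊) and ψ₁″(x) > 0 for x ∈ (x₊, +∞); i.e. ψ₁ is strictly concave on (0, x₊) and strictly convex on (x₊, ∞). -/
noncomputable def phi (x : ℝ) : ℝ := 2 * (Real.sqrt (1 + x) - 1)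

noncomputable def psi1 (a b1 b2 x : ℝ) : ℝ := (b1 * phi x + b2 * x) / (a + x) + x

noncomputable def phi1 (a b1 b2 u : ℝ) : ℝ :=
  3 * b1 * (u + 1) ^ 4 - (8 * b1 + 4 * a * b2) * (u + 1) ^ 3 +
    6 * b1 * (1 - a) * (u + 1) ^ 2 - b1 * (a - 1) ^ 2

noncomputable def D1 (a b1 b2 x : ℝ) : ℝ :=
  ((b1 / Real.sqrt (1 + x) + b2) * (a + x) -
    (b1 * (2 * (Real.sqrt (1 + x) - 1)) + b2 * x)) / (a + x) ^ 2 + 1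

noncomputable def psi1'' (a b1 b2 x : ℝ) : ℝ :=
  phi1 a b1 b2 (Real.sqrt (1 + x) - 1) / (2 * Real.sqrt (1 + x) ^ 3 * (a + x) ^ 3)

lemma hasDerivAt_psi1 (a b1 b2 x : ℝ) (ha : 0 < a) (hx : 0 < x) :
    HasDerivAt (psi1 a b1 b2) (D1 a b1 b2 x) x := by
  have h1x : (0:ℝ) < 1 + x := by linarith
  have hs : 0 < Real.sqrt (1 + x) := Real.sqrt_pos.2 h1x
  have hax : (0:ℝ) < a + x := by linarith
  have hsqrt : HasDerivAt (fun y : ℝ => Real.sqrt (1 + y))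
      (1 / (2 * Real.sqrt (1 + x))) x := by
    have := ((hasDerivAt_id x).const_add 1).sqrt (by positivity)
    simpa using this
  have hnum : HasDerivAt (fun y : ℝ => b1 * (2 * (Real.sqrt (1 + y) - 1)) + b2 * y)
      (b1 * (2 * (1 / (2 * Real.sqrt (1 + x)))) + b2) x := by
    have h1 : HasDerivAt (fun y : ℝ => 2 * (Real.sqrt (1 + y) - 1))
        (2 * (1 / (2 * Real.sqrt (1 + x)))) x := (hsqrt.sub_const 1).const_mul 2
    have h3 := (h1.const_mul b1).add ((hasDerivAt_id x).const_mul b2)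
    simp only [id_eq, mul_one] at h3
    exact h3
  have hden : HasDerivAt (fun y : ℝ => a + y) 1 x := by
    simpa using (hasDerivAt_id x).const_add a
  have hdiv := (hnum.div hden (ne_of_gt hax)).add (hasDerivAt_id x)
  have hpsi : psi1 a b1 b2 = fun y : ℝ =>
      (b1 * (2 * (Real.sqrt (1 + y) - 1)) + b2 * y) / (a + y) + y := by
    funext y; simp [psi1, phi]
  rw [hpsi]
  refine hdiv.congr_deriv ?_
  unfold D1
  field_simp

lemma hasDerivAt_D1 (a b1 b2 x : ℝ) (ha : 0 < a) (hx : 0 < x) :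
    HasDerivAt (D1 a b1 b2) (psi1'' a b1 b2 x) x := by
  have h1x : (0:ℝ) < 1 + x := by linarith
  have hs : 0 < Real.sqrt (1 + x) := Real.sqrt_pos.2 h1x
  have hax : (0:ℝ) < a + x := by linarith
  have hsqrt : HasDerivAt (fun y : ℝ => Real.sqrt (1 + y))
      (1 / (2 * Real.sqrt (1 + x))) x := by
    have := ((hasDerivAt_id x).const_add 1).sqrt (by positivity)
    simpa using this
  have hinv : HasDerivAt (fun y : ℝ => b1 / Real.sqrt (1 + y))
      ((0 * Real.sqrt (1 + x) - b1 * (1 / (2 * Real.sqrt (1 + x)))) / Real.sqrt (1 + x) ^ 2) x :=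
    (hasDerivAt_const x b1).div hsqrt (ne_of_gt hs)
  have hden : HasDerivAt (fun y : ℝ => a + y) 1 x := by
    simpa using (hasDerivAt_id x).const_add a
  have hnum : HasDerivAt
      (fun y : ℝ => (b1 / Real.sqrt (1 + y) + b2) * (a + y) -
        (b1 * (2 * (Real.sqrt (1 + y) - 1)) + b2 * y))
      (((0 * Real.sqrt (1 + x) - b1 * (1 / (2 * Real.sqrt (1 + x)))) / Real.sqrt (1 + x) ^ 2) * (a + x)
        + (b1 / Real.sqrt (1 + x) + b2) * 1 -
        (b1 * (2 * (1 / (2 * Real.sqrt (1 + x)))) + b2)) x := by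
    have h1 : HasDerivAt (fun y : ℝ => 2 * (Real.sqrt (1 + y) - 1))
        (2 * (1 / (2 * Real.sqrt (1 + x)))) x := (hsqrt.sub_const 1).const_mul 2
    have h2' : HasDerivAt (fun y : ℝ => b1 * (2 * (Real.sqrt (1 + y) - 1)) + b2 * y)
        (b1 * (2 * (1 / (2 * Real.sqrt (1 + x)))) + b2) x := by
      have h3 := (h1.const_mul b1).add ((hasDerivAt_id x).const_mul b2)
      simp only [id_eq, mul_one] at h3
      exact h3
    exact ((hinv.add_const b2).mul hden).sub h2'
  have hden2 : HasDerivAt (fun y : ℝ => (a + y) ^ 2) (2 * (a + x) ^ 1 * 1) x := hden.pow 2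
  have hcomb := (hnum.div hden2 (by positivity)).add_const 1
  have hD1eq : D1 a b1 b2 = fun y : ℝ =>
      ((b1 / Real.sqrt (1 + y) + b2) * (a + y) -
        (b1 * (2 * (Real.sqrt (1 + y) - 1)) + b2 * y)) / (a + y) ^ 2 + 1 := rfl
  rw [hD1eq]
  refine hcomb.congr_deriv ?_
  have h2 : Real.sqrt (1 + x) ^ 2 = 1 + x := Real.sq_sqrt h1x.le
  unfold psi1'' phi1
  set s := Real.sqrt (1 + x) with hsdef
  have hx' : x = s ^ 2 - 1 := by linarith
  rw [hx']
  have hax' : (0:ℝ) < a + (s ^ 2 - 1) := by rw [← hx']; exact hax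
  field_simp
  ring

lemma deriv2_psi1 (a b1 b2 x : ℝ) (ha : 0 < a) (hx : 0 < x) :
    deriv (deriv (psi1 a b1 b2)) x = psi1'' a b1 b2 x := by
  have hev : deriv (psi1 a b1 b2) =ᶠ[nhds x] D1 a b1 b2 :=
    Filter.eventually_of_mem (isOpen_Ioi.mem_nhds hx)
      (fun y hy => (hasDerivAt_psi1 a b1 b2 y ha hy).deriv)
  rw [hev.deriv_eq, (hasDerivAt_D1 a b1 b2 x ha hx).deriv]

lemma phi1_sign (a b1 b2 uplus s : ℝ) (ha : 0 < a) (hb1 : 0 < b1)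
    (hu : 0 < uplus) (hzero : phi1 a b1 b2 uplus = 0) (hs : 1 < s) :
    (s < uplus + 1 → phi1 a b1 b2 (s - 1) < 0) ∧
    (uplus + 1 < s → 0 < phi1 a b1 b2 (s - 1)) := by
  set s0 : ℝ := uplus + 1 with hs0def
  have hs0 : 1 < s0 := by simp [hs0def]; linarith
  set Q : ℝ := 3 * s0 ^ 3 * s ^ 3 + 6 * (a - 1) * s0 ^ 2 * s ^ 2 +
      (a - 1) ^ 2 * (s ^ 2 + s * s0 + s0 ^ 2) with hQdef
  have hQpos : 0 < Q := by
    have h1 : 0 < s0 * s + (a - 1) := by nlinarith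
    have h2 : 0 < 3 * (s0 * s) * (s0 * s + (a - 1)) ^ 2 := by positivity
    nlinarith [sq_nonneg ((a - 1) * (s - s0))]
  have hkey : s0 ^ 3 * phi1 a b1 b2 (s - 1) = (s - s0) * (b1 * Q) := by
    have h0 : phi1 a b1 b2 (s0 - 1) = 0 := by
      simpa [hs0def] using hzero
    unfold phi1 at h0 ⊢
    linear_combination s ^ 3 * h0
  have hs0p : (0:ℝ) < s0 ^ 3 := by positivity
  constructor
  · intro hlt
    have : s0 ^ 3 * phi1 a b1 b2 (s - 1) < 0 := by
      rw [hkey]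
      have : s - s0 < 0 := by linarith
      exact mul_neg_of_neg_of_pos this (by positivity)
    nlinarith
  · intro hlt
    have : 0 < s0 ^ 3 * phi1 a b1 b2 (s - 1) := by
      rw [hkey]
      exact mul_pos (by linarith) (by positivity)
    nlinarith

theorem psi1_concave_convex (a b1 b2 uplus : ℝ)
    (ha : 0 < a) (hb1 : 0 < b1) (hb2 : 0 < b2)
    (hu : 0 < uplus) (hzero : phi1 a b1 b2 uplus = 0)
    (xplus : ℝ) (hx : xplus = uplus ^ 2 + 2 * uplus) :
    (∀ x ∈ Set.Ioo 0 xplus, deriv (deriv (psi1 a b1 b2)) x < 0) ∧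
    (∀ x ∈ Set.Ioi xplus, 0 < deriv (deriv (psi1 a b1 b2)) x) ∧
    StrictConcaveOn ℝ (Set.Ioo 0 xplus) (psi1 a b1 b2) ∧
    StrictConvexOn ℝ (Set.Ioi xplus) (psi1 a b1 b2) := by
  have hxplus : 0 < xplus := by rw [hx]; positivity
  have hsxplus : Real.sqrt (1 + xplus) = uplus + 1 := by
    rw [show (1 : ℝ) + xplus = (uplus + 1) ^ 2 by rw [hx]; ring]
    exact Real.sqrt_sq (by linarith)
  -- sign of second derivative on (0, xplus)
  have hneg : ∀ x ∈ Set.Ioo 0 xplus, deriv (deriv (psi1 a b1 b2)) x < 0 := by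
    intro x hxm
    obtain ⟨hx0, hx1⟩ := hxm
    rw [deriv2_psi1 a b1 b2 x ha hx0]
    have h1x : (0:ℝ) < 1 + x := by linarith
    have hs1 : 1 < Real.sqrt (1 + x) := by
      rw [Real.lt_sqrt (by norm_num)]
      nlinarith
    have hslt : Real.sqrt (1 + x) < uplus + 1 := by
      rw [← hsxplus]
      exact Real.sqrt_lt_sqrt (by linarith) (by linarith)
    have hphi := (phi1_sign a b1 b2 uplus (Real.sqrt (1 + x)) ha hb1 hu hzero hs1).1 hslt
    have hden : 0 < 2 * Real.sqrt (1 + x) ^ 3 * (a + x) ^ 3 := by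
      have : 0 < Real.sqrt (1 + x) := by linarith
      have : 0 < a + x := by linarith
      positivity
    exact div_neg_of_neg_of_pos hphi hden
  have hpos : ∀ x ∈ Set.Ioi xplus, 0 < deriv (deriv (psi1 a b1 b2)) x := by
    intro x hxm
    have hx0 : 0 < x := lt_trans hxplus hxm
    rw [deriv2_psi1 a b1 b2 x ha hx0]
    have h1x : (0:ℝ) < 1 + x := by linarith
    have hs1 : 1 < Real.sqrt (1 + x) := by
      rw [Real.lt_sqrt (by norm_num)]
      nlinarith
    have hslt : uplus + 1 < Real.sqrt (1 + x) := by
      rw [← hsxplus]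
      exact Real.sqrt_lt_sqrt (by linarith) (by simpa using (Set.mem_Ioi.mp hxm))
    have hphi := (phi1_sign a b1 b2 uplus (Real.sqrt (1 + x)) ha hb1 hu hzero hs1).2 hslt
    have hden : 0 < 2 * Real.sqrt (1 + x) ^ 3 * (a + x) ^ 3 := by
      have : 0 < Real.sqrt (1 + x) := by linarith
      have : 0 < a + x := by linarith
      positivity
    exact div_pos hphi hden
  refine ⟨hneg, hpos, ?_, ?_⟩
  · apply strictConcaveOn_of_deriv2_neg (convex_Ioo 0 xplus)
    · intro y hy
      exact (hasDerivAt_psi1 a b1 b2 y ha hy.1).continuousAt.continuousWithinAt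
    · intro y hy
      rw [interior_Ioo] at hy
      exact hneg y hy
  · apply strictConvexOn_of_deriv2_pos (convex_Ioi xplus)
    · intro y hy
      have : 0 < y := lt_trans hxplus hy
      exact (hasDerivAt_psi1 a b1 b2 y ha this).continuousAt.continuousWithinAt
    · intro y hy
      rw [interior_Ioi] at hy
      exact hpos y hy
end

section
/- Let c > 0. The equation 6(√(x+1) − 1)⁵ + 5(√(x+1) − 1)⁴ − 2c√(x+1) − c = 0 has exactly one root x₁ in (0, +∞), and the function ψ₂(x) = v/(c + (x − φ(x))²) (with v > 0 and φ(x) = 2(√(1+x) − 1)) satisfies ψ₂″(x) < 0 for 0 < x < x₁ and ψ₂″(x) > 0 for x > x₁. -/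
noncomputable def psi2 (c v x : ℝ) : ℝ := v / (c + (x - phi x) ^ 2)

lemma keyP (u t : ℝ) (hu : 0 ≤ u) (h : u < t) :
    (6*u^5+5*u^4)*(2*t+3) < (6*t^5+5*t^4)*(2*u+3) := by
  have ht : 0 < t := lt_of_le_of_lt hu h
  have hid : (6*t^5+5*t^4)*(2*u+3) - (6*u^5+5*u^4)*(2*t+3) =
      (t-u)*(18*(t^4+t^3*u+t^2*u^2+t*u^3+u^4)+15*(t^3+t^2*u+t*u^2+u^3)
        +12*(t*u)*(t^3+t^2*u+t*u^2+u^3)+10*(t*u)*(t^2+t*u+u^2)) := by ring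
  nlinarith [mul_pos (sub_pos.2 h) (show (0:ℝ) <
      18*(t^4+t^3*u+t^2*u^2+t*u^3+u^4)+15*(t^3+t^2*u+t*u^2+u^3)
        +12*(t*u)*(t^3+t^2*u+t*u^2+u^3)+10*(t*u)*(t^2+t*u+u^2) by
    nlinarith [pow_pos ht 4, pow_pos ht 3, mul_nonneg hu ht.le,
      mul_nonneg (mul_nonneg hu ht.le) (mul_nonneg ht.le ht.le),
      mul_nonneg hu (mul_nonneg hu hu), mul_nonneg (mul_nonneg hu hu) ht.le,
      mul_nonneg (mul_nonneg hu hu) (mul_nonneg hu hu),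
      mul_nonneg (mul_nonneg hu hu) (mul_nonneg hu ht.le),
      mul_nonneg (mul_nonneg hu ht.le) ht.le,
      mul_nonneg (mul_nonneg (mul_nonneg hu hu) hu) ht.le,
      mul_nonneg (mul_nonneg (mul_nonneg hu hu) hu) hu,
      mul_nonneg (mul_nonneg (mul_nonneg hu ht.le) ht.le) ht.le])]

lemma sqrt_hasDeriv {x : ℝ} (hx : -1 < x) :
    HasDerivAt (fun y => Real.sqrt (1 + y)) (1 / (2 * Real.sqrt (1 + x))) x := by
  have h1 : HasDerivAt (fun y : ℝ => 1 + y) 1 x := (hasDerivAt_id x).const_add 1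
  have h2 := (Real.hasDerivAt_sqrt (show (1:ℝ) + x ≠ 0 by linarith)).comp x h1
  have h3 : HasDerivAt (fun y => Real.sqrt (1 + y)) (1 / (2 * Real.sqrt (1 + x)) * 1) x := h2
  simpa using h3

lemma deriv_psi2 (c v : ℝ) (hc : 0 < c) {x : ℝ} (hx : -1 < x) :
    deriv (psi2 c v) x =
      -2*v*(Real.sqrt (1+x)-1)^3 / (Real.sqrt (1+x) * (c + (Real.sqrt (1+x)-1)^4)^2) := by
  set s := Real.sqrt (1+x) with hs
  have hs0 : 0 < s := Real.sqrt_pos.2 (by linarith)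
  have hs2 : s^2 = 1 + x := Real.sq_sqrt (by linarith)
  have hsd : HasDerivAt (fun y => Real.sqrt (1 + y)) (1/(2*s)) x := sqrt_hasDeriv hx
  have hf : HasDerivAt (fun y => y - phi y) (1 - 1/s) x := by
    have h1 : HasDerivAt (fun y => phi y) (2*(1/(2*s))) x := by
      have := ((hsd.sub_const 1).const_mul 2)
      simpa [phi] using this
    have := (hasDerivAt_id x).sub h1
    exact this.congr_deriv (by ring)
  have hD : HasDerivAt (fun y => c + (y - phi y)^2) (2*(x - phi x)*(1 - 1/s)) x := by
    have := (hf.pow 2).const_add c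
    exact this.congr_deriv (by push_cast; ring)
  have hDne : c + (x - phi x)^2 ≠ 0 := by positivity
  have hpsi : HasDerivAt (psi2 c v)
      ((0 * (c + (x - phi x)^2) - v * (2*(x - phi x)*(1 - 1/s))) / (c + (x - phi x)^2)^2) x := by
    have : psi2 c v = fun y => v / (c + (y - phi y)^2) := rfl
    rw [this]
    exact (hasDerivAt_const x v).div hD hDne
  rw [hpsi.deriv]
  have hxphi : x - phi x = (s-1)^2 := by
    simp only [phi]
    linear_combination -hs2
  rw [hxphi]
  have hA : (0:ℝ) < c + (s-1)^4 := by positivity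
  field_simp
  try ring
  try linarith [hs2]

lemma deriv2_psi2 (c v : ℝ) (hc : 0 < c) {x : ℝ} (hx : 0 < x) :
    deriv (deriv (psi2 c v)) x =
      v*(Real.sqrt (1+x)-1)^2 *
        ((6*Real.sqrt (1+x)-1)*(Real.sqrt (1+x)-1)^4 - (2*Real.sqrt (1+x)+1)*c) /
        ((Real.sqrt (1+x))^3 * (c + (Real.sqrt (1+x)-1)^4)^3) := by
  have hx1 : (-1:ℝ) < x := by linarith
  have hev : deriv (psi2 c v) =ᶠ[nhds x]
      (fun y => -2*v*(Real.sqrt (1+y)-1)^3 /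
        (Real.sqrt (1+y) * (c + (Real.sqrt (1+y)-1)^4)^2)) := by
    filter_upwards [Ioi_mem_nhds hx1] with y hy
    exact deriv_psi2 c v hc hy
  rw [hev.deriv_eq]
  set s := Real.sqrt (1+x) with hs
  have hs0 : 0 < s := Real.sqrt_pos.2 (by linarith)
  have hsd : HasDerivAt (fun y => Real.sqrt (1 + y)) (1/(2*s)) x := sqrt_hasDeriv hx1
  have hnum : HasDerivAt (fun y => -2*v*(Real.sqrt (1+y)-1)^3)
      (-2*v*(3*(s-1)^2*(1/(2*s)))) x := by
    have := ((hsd.sub_const 1).pow 3).const_mul (-2*v)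
    exact this.congr_deriv (by push_cast; ring)
  have hA : HasDerivAt (fun y => c + (Real.sqrt (1+y)-1)^4) (4*(s-1)^3*(1/(2*s))) x := by
    have := ((hsd.sub_const 1).pow 4).const_add c
    exact this.congr_deriv (by push_cast; ring)
  have hden : HasDerivAt (fun y => Real.sqrt (1+y) * (c + (Real.sqrt (1+y)-1)^4)^2)
      ((1/(2*s))*(c+(s-1)^4)^2 + s*(2*(c+(s-1)^4)*(4*(s-1)^3*(1/(2*s))))) x := by
    have h2 : HasDerivAt (fun y => (c + (Real.sqrt (1+y)-1)^4)^2)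
        (2*(c+(s-1)^4)*(4*(s-1)^3*(1/(2*s)))) x := by
      have := hA.pow 2
      exact this.congr_deriv (by push_cast; ring)
    exact hsd.mul h2
  have hden0 : s * (c + (s-1)^4)^2 ≠ 0 := by positivity
  have hG := hnum.div hden hden0
  rw [show (fun y => -2*v*(Real.sqrt (1+y)-1)^3 / (Real.sqrt (1+y) * (c + (Real.sqrt (1+y)-1)^4)^2)) = ((fun y => -2*v*(Real.sqrt (1+y)-1)^3) / fun y => Real.sqrt (1+y) * (c + (Real.sqrt (1+y)-1)^4)^2) from rfl, hG.deriv]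
  have hApos : (0:ℝ) < c + (s-1)^4 := by positivity
  field_simp
  ring

theorem psi2_inflection (c v : ℝ) (hc : 0 < c) (hv : 0 < v) :
    ∃ x1 : ℝ, 0 < x1 ∧
      6 * (Real.sqrt (x1 + 1) - 1) ^ 5 + 5 * (Real.sqrt (x1 + 1) - 1) ^ 4 -
        2 * c * Real.sqrt (x1 + 1) - c = 0 ∧
      (∀ x : ℝ, 0 < x →
        6 * (Real.sqrt (x + 1) - 1) ^ 5 + 5 * (Real.sqrt (x + 1) - 1) ^ 4 -
          2 * c * Real.sqrt (x + 1) - c = 0 → x = x1) ∧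
      (∀ x : ℝ, 0 < x → x < x1 → deriv (deriv (psi2 c v)) x < 0) ∧
      (∀ x : ℝ, x1 < x → 0 < deriv (deriv (psi2 c v)) x) := by
  set g : ℝ → ℝ := fun t => 6*t^5+5*t^4-2*c*t-3*c with hg
  have hgc : Continuous g := by fun_prop
  have hg0 : g 0 < 0 := by simp only [hg]; nlinarith
  have hgb : 0 < g (c+1) := by
    simp only [hg]
    nlinarith [pow_pos (show (0:ℝ) < c+1 by linarith) 5,
      pow_pos (show (0:ℝ) < c+1 by linarith) 4, sq_nonneg c,
      pow_le_pow_right₀ (show (1:ℝ) ≤ c+1 by linarith) (show 2 ≤ 5 by norm_num),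
      pow_le_pow_right₀ (show (1:ℝ) ≤ c+1 by linarith) (show 1 ≤ 4 by norm_num)]
  -- root of g
  obtain ⟨t1, ht1mem, ht1⟩ : ∃ t1 ∈ Set.Icc (0:ℝ) (c+1), g t1 = 0 := by
    have := intermediate_value_Icc (show (0:ℝ) ≤ c+1 by linarith) hgc.continuousOn
    have h0 : (0:ℝ) ∈ Set.Icc (g 0) (g (c+1)) := ⟨hg0.le, hgb.le⟩
    obtain ⟨t1, ht1m, ht1e⟩ := this h0
    exact ⟨t1, ht1m, ht1e⟩
  have ht1pos : 0 < t1 := by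
    rcases (lt_or_eq_of_le ht1mem.1) with h | h
    · exact h
    · exfalso; rw [← h] at ht1; linarith [ht1, hg0]
  -- sign lemmas for g
  have hgeq : 6*t1^5+5*t1^4 = 2*c*t1+3*c := by
    have := ht1; simp only [hg] at this; linarith
  have hgpos : ∀ t : ℝ, t1 < t → 0 < 6*t^5+5*t^4-2*c*t-3*c := by
    intro t ht
    have hk := keyP t1 t ht1pos.le ht
    have h2 : (2*t1+3) * (2*c*t+3*c) < (2*t1+3) * (6*t^5+5*t^4) := by nlinarith [hk]
    have h3 := lt_of_mul_lt_mul_left h2 (by linarith : (0:ℝ) ≤ 2*t1+3)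
    linarith
  have hgneg : ∀ t : ℝ, 0 ≤ t → t < t1 → 6*t^5+5*t^4-2*c*t-3*c < 0 := by
    intro t ht0 ht
    have hk := keyP t t1 ht0 ht
    have h2 : (2*t1+3) * (6*t^5+5*t^4) < (2*t1+3) * (2*c*t+3*c) := by nlinarith [hk]
    have h3 := lt_of_mul_lt_mul_left h2 (by linarith : (0:ℝ) ≤ 2*t1+3)
    linarith
  -- define x1
  refine ⟨t1^2 + 2*t1, by nlinarith, ?_, ?_, ?_, ?_⟩
  case _ =>
    have hsq : Real.sqrt (t1^2 + 2*t1 + 1) = t1 + 1 := by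
      rw [show t1^2 + 2*t1 + 1 = (t1+1)^2 by ring, Real.sqrt_sq (by linarith)]
    rw [hsq]
    have := ht1; simp only [hg] at this
    linarith [this]
  case _ =>
    intro x hx heq
    have hx1 : (0:ℝ) ≤ x + 1 := by linarith
    have hs2 : (Real.sqrt (x+1))^2 = x + 1 := Real.sq_sqrt hx1
    have hs1 : 1 < Real.sqrt (x+1) := by
      have : Real.sqrt 1 < Real.sqrt (x+1) := Real.sqrt_lt_sqrt (by norm_num) (by linarith)
      simpa using this
    set t := Real.sqrt (x+1) - 1 with htdef
    have ht0 : 0 < t := by simp only [htdef]; linarith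
    have hgt : 6*t^5+5*t^4-2*c*t-3*c = 0 := by
      have : Real.sqrt (x+1) = t + 1 := by simp [htdef]
      rw [this] at heq
      linarith [heq]
    have htt1 : t = t1 := by
      rcases lt_trichotomy t t1 with h | h | h
      · exfalso; linarith [hgneg t ht0.le h]
      · exact h
      · exfalso; linarith [hgpos t h]
    have hxval : x = (Real.sqrt (x+1))^2 - 1 := by linarith [hs2]
    rw [hxval]
    have : Real.sqrt (x+1) = t1 + 1 := by rw [← htt1]; simp [htdef]
    rw [this]; ring
  case _ =>
    intro x hx hxlt
    rw [deriv2_psi2 c v hc hx]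
    set s := Real.sqrt (1+x) with hsdef
    have hs0 : 0 < s := Real.sqrt_pos.2 (by linarith)
    have hs1 : 1 < s := by
      have : Real.sqrt 1 < Real.sqrt (1+x) := Real.sqrt_lt_sqrt (by norm_num) (by linarith)
      simpa [hsdef] using this
    have hslt : s < t1 + 1 := by
      have h1 : Real.sqrt (1+x) < Real.sqrt (1+(t1^2+2*t1)) :=
        Real.sqrt_lt_sqrt (by linarith) (by linarith)
      have h2 : Real.sqrt (1+(t1^2+2*t1)) = t1 + 1 := by
        rw [show 1+(t1^2+2*t1) = (t1+1)^2 by ring, Real.sqrt_sq (by linarith)]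
      rw [h2] at h1; exact h1
    have hN : (6*s-1)*(s-1)^4 - (2*s+1)*c < 0 := by
      have := hgneg (s-1) (by linarith) (by linarith)
      nlinarith [this]
    apply div_neg_of_neg_of_pos
    · have h1 : (0:ℝ) < (s-1)^2 := pow_pos (show (0:ℝ) < s-1 by linarith) 2
      nlinarith [mul_pos (mul_pos hv h1) (neg_pos.2 hN)]
    · positivity
  case _ =>
    intro x hxgt
    have hx : 0 < x := by nlinarith
    rw [deriv2_psi2 c v hc hx]
    set s := Real.sqrt (1+x) with hsdef
    have hs0 : 0 < s := Real.sqrt_pos.2 (by linarith)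
    have hsgt : t1 + 1 < s := by
      have h1 : Real.sqrt (1+(t1^2+2*t1)) < Real.sqrt (1+x) :=
        Real.sqrt_lt_sqrt (by nlinarith) (by linarith)
      have h2 : Real.sqrt (1+(t1^2+2*t1)) = t1 + 1 := by
        rw [show 1+(t1^2+2*t1) = (t1+1)^2 by ring, Real.sqrt_sq (by linarith)]
      rw [h2] at h1; exact h1
    have hs1 : 1 < s := by linarith
    have hN : 0 < (6*s-1)*(s-1)^4 - (2*s+1)*c := by
      have := hgpos (s-1) (by linarith)
      nlinarith [this]
    apply div_pos
    · have h1 : (0:ℝ) < (s-1)^2 := pow_pos (show (0:ℝ) < s-1 by linarith) 2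
      nlinarith [mul_pos (mul_pos hv h1) hN]
    · positivity
end
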